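/- If gcd(k, l) = 1 and r divides l, then for each residue class i modulo r, the sum Σ_{m ≡ i mod r} p(k, l-1, m) of restricted partition numbers equals (1/r)·C(k+l-1, l-1). -/

import Mathlib

/-!
Through conjugation, a partition of `m` into at most `l - 1` parts of size at most `k` is the
same as a multiset of `k` elements of `Fin l` with sum `m`; there are `C(k + l - 1, k)` such
multisets in total. Adding `1` (mod `l`) to every element permutes these multisets and, as
`r ∣ l`, adds `k` to the sum modulo `r`. Since `k` is a unit mod `r`, iterating this shift
identifies the sizes of all residue classes of the sum, so each class holds a fraction `1/r`.
-/

def restrictedPartitions (M N n : ℕ) : ℕ :=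
  ((Finset.univ : Finset (Fin N → Fin (M + 1))).filter
    (fun f => (∀ i j : Fin N, i ≤ j → (f j : ℕ) ≤ (f i : ℕ)) ∧
      ∑ i, (f i : ℕ) = n)).card

open Finset

theorem Fin.lt_card_filter_iff_of_antitone {n : ℕ} {p : Fin n → Prop} [DecidablePred p]
    (hp : Antitone p) (i : Fin n) : (i : ℕ) < #{j | p j} ↔ p i := by
  constructor
  · intro hi
    by_contra hpi
    have : univ.filter p ⊆ Iio i := fun j hj =>
      mem_Iio.2 (lt_of_not_ge fun hij => hpi (hp hij (mem_filter.1 hj).2))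
    exact (card_le_card this).not_gt (by simpa using hi)
  · intro hpi
    have : Iic i ⊆ univ.filter p := fun j hj => by
      simpa using hp (mem_Iic.1 hj) hpi
    simpa using card_le_card this

theorem Fin.natCast_val_add_one {l r : ℕ} [NeZero l] (hr : r ∣ l) (x : Fin l) :
    (((x + 1 : Fin l) : ℕ) : ZMod r) = (x : ℕ) + 1 := by
  have hmod (a : ℕ) : ((a % l : ℕ) : ZMod r) = a :=
    (ZMod.natCast_eq_natCast_iff _ _ _).2 ((Nat.mod_modEq a l).of_dvd hr)
  rw [Fin.val_add, hmod, Nat.cast_add, Fin.val_one', hmod, Nat.cast_one]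

def antitoneEquivSym (α : Type*) [LinearOrder α] (k : ℕ) :
    {f : Fin k → α // Antitone f} ≃ Sym α k where
  toFun f := ⟨List.ofFn f.1, by simp⟩
  invFun s := ⟨fun i => (s.1.sort (· ≥ ·)).get (i.cast (by simp)), fun i j hij =>
    (List.sortedGE_iff_pairwise.2 (Multiset.pairwise_sort _ _)) (Fin.cast_le_cast _ |>.2 hij)⟩
  left_inv f := by
    have hsort : (Multiset.ofList (List.ofFn f.1)).sort (· ≥ ·) = List.ofFn f.1 :=
      List.Perm.eq_of_sortedGE (List.sortedGE_iff_pairwise.2 (Multiset.pairwise_sort _ _))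
        (List.sortedGE_ofFn_iff.2 f.2) (Quotient.exact (Multiset.sort_eq _ _))
    ext i
    exact (List.getElem_of_eq hsort _).trans (by simp)
  right_inv s := by
    have hofFn : List.ofFn (fun i : Fin k => (s.1.sort (· ≥ ·)).get (i.cast (by simp))) =
        s.1.sort (· ≥ ·) :=
      List.ext_getElem (by simp) fun _ _ _ => List.getElem_ofFn _
    ext1
    exact (congrArg Multiset.ofList hofFn).trans (Multiset.sort_eq _ _)

theorem coe_antitoneEquivSym {α : Type*} [LinearOrder α] {k : ℕ}
    (f : {f : Fin k → α // Antitone f}) :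
    (antitoneEquivSym α k f : Multiset α) = List.ofFn f.1 :=
  rfl

theorem card_filter_eq_add {X G : Type*} [Fintype X] [AddRightCancelMonoid G] [DecidableEq G]
    (σ : X ≃ X) {w : X → G} {d : G} (hw : ∀ x, w (σ x) = w x + d) (a : G) :
    #{x | w x = a + d} = #{x | w x = a} :=
  (card_equiv σ fun x => by simp [hw]).symm

theorem card_filter_eq_add_nsmul {X G : Type*} [Fintype X] [AddRightCancelMonoid G]
    [DecidableEq G] (σ : X ≃ X) {w : X → G} {d : G} (hw : ∀ x, w (σ x) = w x + d) (a : G)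
    (t : ℕ) : #{x | w x = a + t • d} = #{x | w x = a} := by
  induction t with
  | zero => simp
  | succ t ih => rw [succ_nsmul, ← add_assoc, card_filter_eq_add σ hw, ih]

section Conjugate

variable {k n : ℕ}

def conjugate (f : Fin n → Fin (k + 1)) (t : Fin k) : Fin (n + 1) :=
  ⟨#{i | (t : ℕ) < f i}, Nat.lt_succ_of_le ((card_le_univ _).trans_eq (Fintype.card_fin n))⟩

theorem antitone_conjugate (f : Fin n → Fin (k + 1)) : Antitone (conjugate f) :=
  fun _ _ hst => Fin.mk_le_mk.2 <| card_le_card <| monotone_filter_right _ fun _ _ =>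
    lt_of_le_of_lt (Fin.val_le_of_le hst)

theorem conjugate_conjugate {f : Fin n → Fin (k + 1)} (hf : Antitone f) :
    conjugate (conjugate f) = f := by
  funext i
  have key (t : Fin k) : (i : ℕ) < conjugate f t ↔ (t : ℕ) < f i :=
    Fin.lt_card_filter_iff_of_antitone (p := fun j => (t : ℕ) < f j)
      (fun _ _ hab h => lt_of_lt_of_le h (hf hab)) i
  ext
  simp only [conjugate] at key ⊢
  simp only [key, Fin.card_filter_val_lt]
  omega

theorem sum_conjugate (f : Fin n → Fin (k + 1)) :
    ∑ t, (conjugate f t : ℕ) = ∑ i, (f i : ℕ) := by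
  simp only [conjugate, card_filter]
  rw [sum_comm]
  refine sum_congr rfl fun i _ => ?_
  rw [← card_filter, Fin.card_filter_val_lt]
  omega

end Conjugate

theorem restrictedPartitions_eq_card (M N n : ℕ) :
    restrictedPartitions M N n =
      #{f : Fin N → Fin (M + 1) | Antitone f ∧ ∑ i, (f i : ℕ) = n} := by
  rw [restrictedPartitions]
  congr 1

theorem restrictedPartitions_comm (M N n : ℕ) :
    restrictedPartitions M N n = restrictedPartitions N M n := by
  simp only [restrictedPartitions_eq_card]
  refine card_nbij' conjugate conjugate ?_ ?_ ?_ ?_ <;> intro f hf <;>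
    simp only [coe_filter, mem_univ, true_and, Set.mem_ofPred_eq] at hf ⊢
  · exact ⟨antitone_conjugate f, (sum_conjugate f).trans hf.2⟩
  · exact ⟨antitone_conjugate f, (sum_conjugate f).trans hf.2⟩
  · exact conjugate_conjugate hf.1
  · exact conjugate_conjugate hf.1

namespace Sym

def valSum {l k : ℕ} (s : Sym (Fin l) k) : ℕ :=
  ((s : Multiset (Fin l)).map Fin.val).sum

theorem valSum_le {l k : ℕ} (s : Sym (Fin (l + 1)) k) : s.valSum ≤ k * l := by
  have := Multiset.sum_le_card_nsmul ((s : Multiset (Fin (l + 1))).map Fin.val) l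
    (fun x hx => by obtain ⟨y, -, rfl⟩ := Multiset.mem_map.1 hx; exact Nat.lt_succ_iff.1 y.2)
  simpa [valSum] using this

theorem valSum_map_add_one {l k r : ℕ} [NeZero l] (hr : r ∣ l) (s : Sym (Fin l) k) :
    ((s.map (· + 1)).valSum : ZMod r) = s.valSum + k := by
  simp only [valSum, coe_map, Multiset.map_map, Nat.cast_multiset_sum, Function.comp_def,
    Fin.natCast_val_add_one hr, Multiset.sum_map_add]
  simp only [Multiset.map_const', card_coe, Multiset.sum_replicate, nsmul_eq_mul, mul_one]

theorem card_filter_valSum_cast_eq {l k r : ℕ} [NeZero l] [NeZero r] (hr : r ∣ l)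
    (hk : k.Coprime r) (a : ZMod r) :
    #{s : Sym (Fin l) k | (s.valSum : ZMod r) = a} =
      #{s : Sym (Fin l) k | (s.valSum : ZMod r) = 0} := by
  have ha : a = 0 + (a * (k : ZMod r)⁻¹).val • (k : ZMod r) := by
    rw [nsmul_eq_mul, ZMod.natCast_zmod_val, zero_add, mul_assoc,
      ZMod.inv_mul_of_unit _ ((ZMod.isUnit_iff_coprime k r).2 hk), mul_one]
  conv_lhs => rw [ha]
  exact card_filter_eq_add_nsmul (equivCongr (Equiv.addRight 1)) (valSum_map_add_one hr) _ _

theorem mul_card_filter_valSum_cast_eq_choose {l k r : ℕ} [NeZero l] [NeZero r] (hr : r ∣ l)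
    (hk : k.Coprime r) (a : ZMod r) :
    r * #{s : Sym (Fin l) k | (s.valSum : ZMod r) = a} = (l + k - 1).choose k := by
  have hfib := card_eq_sum_card_fiberwise (s := (univ : Finset (Sym (Fin l) k)))
    (t := univ) (f := fun s => (s.valSum : ZMod r)) fun _ _ => mem_univ _
  rw [card_univ, card_sym_eq_choose, Fintype.card_fin,
    sum_congr rfl fun b _ => card_filter_valSum_cast_eq hr hk b, sum_const, card_univ,
    ZMod.card] at hfib
  rw [hfib, card_filter_valSum_cast_eq hr hk a, smul_eq_mul]

end Sym

theorem restrictedPartitions_eq_card_valSum (k n m : ℕ) :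
    restrictedPartitions k n m = #{s : Sym (Fin (n + 1)) k | s.valSum = m} := by
  rw [restrictedPartitions_comm, restrictedPartitions_eq_card]
  have hsum (f : {f : Fin k → Fin (n + 1) // Antitone f}) :
      (antitoneEquivSym _ k f).valSum = ∑ i, (f.1 i : ℕ) := by
    simp [Sym.valSum, coe_antitoneEquivSym, List.sum_ofFn]
  refine card_bij' (fun f hf => antitoneEquivSym _ k ⟨f, (mem_filter.1 hf).2.1⟩)
    (fun s _ => ((antitoneEquivSym _ k).symm s).1) ?_ ?_ (fun _ _ => by simp)
    (fun _ _ => by simp)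
  · intro f hf
    simp only [mem_filter, mem_univ, true_and] at hf ⊢
    exact (hsum _).trans hf.2
  · intro s hs
    simp only [mem_filter, mem_univ, true_and] at hs ⊢
    refine ⟨((antitoneEquivSym _ k).symm s).2, ?_⟩
    rw [← hsum, Equiv.apply_symm_apply, hs]

theorem sum_restrictedPartitions_mod_general (k l r : ℕ) (hl : 0 < l)
    (h : Nat.gcd k l = 1) (hrl : r ∣ l) (i : ℕ) (hi : i < r) :
    r * ∑ m ∈ (Finset.range (k * (l - 1) + 1)).filter (fun m => m % r = i),
        restrictedPartitions k (l - 1) m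
      = (k + l - 1).choose (l - 1) := by
  obtain ⟨n, rfl⟩ : ∃ n, l = n + 1 := ⟨l - 1, by omega⟩
  have : NeZero r := ⟨by omega⟩
  simp only [Nat.add_sub_cancel, restrictedPartitions_eq_card_valSum]
  have hfib : ∑ m ∈ (range (k * n + 1)).filter (fun m => m % r = i),
      #{s : Sym (Fin (n + 1)) k | s.valSum = m} =
        #{s : Sym (Fin (n + 1)) k | (s.valSum : ZMod r) = i} := by
    rw [sum_card_fiberwise_eq_card_filter]
    congr 1
    refine filter_congr fun s _ => ?_
    have := s.valSum_le
    rw [ZMod.natCast_eq_natCast_iff', Nat.mod_eq_of_lt hi, mem_filter, mem_range]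
    omega
  rw [hfib, Sym.mul_card_filter_valSum_cast_eq_choose hrl (Nat.Coprime.coprime_dvd_right hrl h),
    show n + 1 + k - 1 = k + n by omega, show k + (n + 1) - 1 = k + n by omega]
  exact Nat.choose_symm_add

/-- If gcd(k,l)=1 and r ∣ l then ∑_{m ≡ i mod r} p(k, l-1, m) = C(k+l-1, l-1)/r. -/
theorem sum_restrictedPartitions_mod (k l r : ℕ) (hk : 0 < k) (hl : 0 < l)
    (h : Nat.gcd k l = 1) (hr : 0 < r) (hrl : r ∣ l) (i : ℕ) (hi : i < r) :
    r * ∑ m ∈ (Finset.range (k * (l - 1) + 1)).filter (fun m => m % r = i),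
        restrictedPartitions k (l - 1) m
      = (k + l - 1).choose (l - 1) :=
  sum_restrictedPartitions_mod_general k l r hl h hrl i hi
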